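/- arXiv:2006.10025 — 3 statements merged into one kernel-verified Lean document; each statement's English description precedes it below -/
import Mathlib

section
/- For a partition λ, an integer m ∈ J^(λ) = ℤ \ M^(λ), and l ≥ ℓ(λ), the index sets satisfy K^(m▷λ)_{l+1} = K^(λ)_l ∪ {m + l}. -/
/-- A partition, as a 1-indexed weakly decreasing sequence of non-negative
integers with finitely many nonzero parts (index 0 is unused and set to 0). -/
def IsPartition (lam : ℕ → ℕ) : Prop :=
  lam 0 = 0 ∧ (∀ i, 1 ≤ i → lam (i + 1) ≤ lam i) ∧ ∃ n, ∀ i, n ≤ i → lam i = 0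

/-- The length `ℓ(λ)`: the number of nonzero parts. -/
noncomputable def plen (lam : ℕ → ℕ) : ℕ := Set.ncard {i : ℕ | lam i ≠ 0}

/-- The Maya diagram `M^(λ) = {λ_i - i : i ≥ 1}`. -/
def Maya (lam : ℕ → ℕ) : Set ℤ := {z | ∃ i : ℕ, 1 ≤ i ∧ z = (lam i : ℤ) - i}

/-- The index set `K^(λ)_l = {m_i(λ)+l : 1 ≤ i ≤ l}` where `m_i(λ) = λ_i - i`. -/
def KlamL (lam : ℕ → ℕ) (l : ℕ) : Set ℤ :=
  {z | ∃ i : ℕ, 1 ≤ i ∧ i ≤ l ∧ z = (lam i : ℤ) - i + l}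

/-- The insertion `m ▷ λ`: the partition `(λ_1-1, …, λ_j-1, m+j, λ_{j+1}, …)`,
where `j` is minimal with `m + j ≥ λ_{j+1}` (1-indexed; index 0 unused). -/
def insPart (lam : ℕ → ℕ) (m : ℤ) (j : ℕ) : ℕ → ℕ := fun i =>
  if i = 0 then 0
  else if i ≤ j then lam i - 1
  else if i = j + 1 then (m + j).toNat
  else lam (i - 1)

/-- Monotonicity: the parts are weakly decreasing from index 1 on. -/
lemma part_mono (lam : ℕ → ℕ) (hp : IsPartition lam) :
    ∀ i k : ℕ, 1 ≤ i → lam (i + k) ≤ lam i := by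
  intro i k hi
  induction k with
  | zero => exact le_refl _
  | succ k ih => exact le_trans (hp.2.1 (i + k) (by omega)) ih

/-- Characterization of the length. -/
lemma plen_spec (lam : ℕ → ℕ) (hp : IsPartition lam) :
    (∀ i, 1 ≤ i → i ≤ plen lam → lam i ≠ 0) ∧ (∀ i, plen lam < i → lam i = 0) := by
  classical
  obtain ⟨n, hn⟩ := hp.2.2
  obtain ⟨N, hN⟩ : ∃ N, N = Nat.findGreatest (fun i => lam i ≠ 0) n := ⟨_, rfl⟩
  have hSN : {i : ℕ | lam i ≠ 0} = Set.Icc 1 N := by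
    ext i
    simp only [Set.mem_setOf_eq, Set.mem_Icc]
    constructor
    · intro hi
      have h1 : 1 ≤ i := by
        rcases Nat.eq_zero_or_pos i with h | h
        · exact absurd (h ▸ hp.1) hi
        · exact h
      have h2 : i ≤ n := by
        by_contra h
        exact hi (hn i (by omega))
      exact ⟨h1, hN ▸ Nat.le_findGreatest h2 hi⟩
    · rintro ⟨h1, h2⟩
      have hNne : N ≠ 0 := by omega
      have hPN : lam N ≠ 0 := Nat.findGreatest_of_ne_zero (P := fun i => lam i ≠ 0) hN.symm hNne
      have := part_mono lam hp i (N - i) h1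
      rw [show i + (N - i) = N by omega] at this
      omega
  have hplen : plen lam = N := by
    rw [plen, hSN, ← Finset.coe_Icc, Set.ncard_coe_finset, Nat.card_Icc]
    omega
  constructor
  · intro i h1 h2
    have : i ∈ {i : ℕ | lam i ≠ 0} := by rw [hSN]; exact ⟨h1, hplen ▸ h2⟩
    exact this
  · intro i hi
    by_contra h
    have : i ∈ {i : ℕ | lam i ≠ 0} := h
    rw [hSN, Set.mem_Icc] at this
    omega

/-- For `m ∈ J^(λ)` and `l ≥ ℓ(λ)`, the index sets satisfy
`K^(m▷λ)_{l+1} = K^(λ)_l ∪ {m + l}`. -/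
theorem stmt3 (lam : ℕ → ℕ) (hp : IsPartition lam) (m : ℤ) (hm : m ∉ Maya lam)
    (j : ℕ) (hj : (lam (j + 1) : ℤ) ≤ m + j)
    (hjmin : ∀ j' < j, ¬ ((lam (j' + 1) : ℤ) ≤ m + j'))
    (l : ℕ) (hl : plen lam ≤ l) :
    KlamL (insPart lam m j) (l + 1) = KlamL lam l ∪ {m + l} := by
  obtain ⟨hpos, hzero⟩ := plen_spec lam hp
  -- j ≤ plen lam
  have hjp : j ≤ plen lam := by
    by_contra h
    push_neg at h
    have h0 : lam (plen lam + 1) = 0 := hzero _ (by omega)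
    have := hjmin (plen lam) h
    rw [h0] at this
    push_cast at this
    have hmneg : m + (plen lam : ℤ) < 0 := by omega
    apply hm
    refine ⟨(-m).toNat, by omega, ?_⟩
    have hl0 : lam ((-m).toNat) = 0 := hzero _ (by omega)
    rw [hl0]
    omega
  have hjl : j ≤ l := le_trans hjp hl
  have hmj : 0 ≤ m + j := le_trans (by positivity) hj
  have hlampos : ∀ i, 1 ≤ i → i ≤ j → 1 ≤ lam i := by
    intro i h1 h2
    have := hpos i h1 (by omega)
    omega
  ext z
  simp only [KlamL, insPart, Set.mem_setOf_eq, Set.mem_union, Set.mem_singleton_iff]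
  constructor
  · rintro ⟨i, h1, h2, hz⟩
    rw [if_neg (by omega)] at hz
    by_cases hij : i ≤ j
    · rw [if_pos hij] at hz
      left
      refine ⟨i, h1, by omega, ?_⟩
      have := hlampos i h1 hij
      push_cast [this] at hz ⊢
      omega
    · rw [if_neg hij] at hz
      by_cases hij1 : i = j + 1
      · rw [if_pos hij1] at hz
        right
        rw [hz, Int.toNat_of_nonneg hmj]
        omega
      · rw [if_neg hij1] at hz
        left
        refine ⟨i - 1, by omega, by omega, ?_⟩
        rw [hz]
        push_cast [show (1:ℕ) ≤ i by omega]
        omega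
  · rintro (⟨i, h1, h2, hz⟩ | hz)
    · by_cases hij : i ≤ j
      · refine ⟨i, h1, by omega, ?_⟩
        rw [if_neg (by omega), if_pos hij]
        have := hlampos i h1 hij
        push_cast [this]
        omega
      · refine ⟨i + 1, by omega, by omega, ?_⟩
        rw [if_neg (by omega), if_neg (by omega), if_neg (by omega)]
        simp only [Nat.add_sub_cancel]
        push_cast
        omega
    · refine ⟨j + 1, by omega, by omega, ?_⟩
      rw [if_neg (by omega), if_neg (by omega), if_pos rfl]
      rw [Int.toNat_of_nonneg hmj]
      push_cast
      omega
end

section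
/- Let λ be a partition with g^(λ)_q = #((M^(λ)+q) ∩ (ℤ \ M^(λ))) for q ∈ ℤ. Then g^(λ)_q = g^(λ)_{−q} + q for every integer q. -/
/-- `g^(λ)_q = #((M^(λ) + q) ∩ (ℤ \ M^(λ)))`. -/
noncomputable def gq (lam : ℕ → ℕ) (q : ℤ) : ℕ :=
  (((fun z => z + q) '' Maya lam) ∩ (Maya lam)ᶜ).ncard

open Set

theorem Set.ncard_sdiff_sub_ncard_sdiff {α : Type*} {X M I : Set α} (hX : (X ∩ I).Finite)
    (hM : (M ∩ I).Finite) (hXI : X \ M ⊆ I) (hMI : M \ X ⊆ I) :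
    ((X \ M).ncard : ℤ) - (M \ X).ncard = (X ∩ I).ncard - (M ∩ I).ncard := by
  have hXd : (X ∩ I) \ M = X \ M := by rw [inter_sdiff_right_comm, inter_eq_left.2 hXI]
  have hMd : (M ∩ I) \ X = M \ X := by rw [inter_sdiff_right_comm, inter_eq_left.2 hMI]
  have hcomm : X ∩ I ∩ M = M ∩ I ∩ X := by
    rw [inter_right_comm, inter_comm X M, inter_right_comm]
  have eX := ncard_inter_add_ncard_sdiff_eq_ncard (X ∩ I) M hX
  have eM := ncard_inter_add_ncard_sdiff_eq_ncard (M ∩ I) X hM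
  rw [hXd, hcomm] at eX
  rw [hMd] at eM
  omega

theorem ncard_image_add_neg_sdiff {G : Type*} [AddGroup G] (M : Set G) (q : G) :
    ((fun z => z + -q) '' M \ M).ncard = (M \ (fun z => z + q) '' M).ncard := by
  rw [← ncard_image_of_injective _ (add_left_injective q), image_sdiff (add_left_injective q),
    image_image]
  simp

section CoBounded

variable {M : Set ℤ} {a : ℤ}

theorem ncard_inter_Ici_of_Iio_subset (hlo : Iio a ⊆ M) (hfin : (M ∩ Ici a).Finite) {c : ℤ}
    (hc : c ≤ a) : ((M ∩ Ici c).ncard : ℤ) = a - c + (M ∩ Ici a).ncard := by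
  have hsplit : M ∩ Ici c = Ico c a ∪ (M ∩ Ici a) := by
    rw [← Ico_union_Ici_eq_Ici hc, inter_union_distrib_left,
      inter_eq_right.2 (Ico_subset_Iio_self.trans hlo)]
  have hdisj : Disjoint (Ico c a) (M ∩ Ici a) :=
    (Iio_disjoint_Ici le_rfl).mono Ico_subset_Iio_self inter_subset_right
  rw [hsplit, ncard_union_eq hdisj (finite_Ico c a) hfin, ← Finset.coe_Ico, ncard_coe_finset]
  push_cast
  rw [Int.card_Ico_of_le _ _ hc]

theorem image_add_inter_Ici (q c : ℤ) :
    (fun z => z + q) '' M ∩ Ici c = (fun z => z + q) '' (M ∩ Ici (c - q)) := by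
  rw [image_inter (add_left_injective q), image_add_const_Ici, sub_add_cancel]

theorem ncard_image_add_sdiff (hlo : Iio a ⊆ M) (hhi : BddAbove M) (q : ℤ) :
    (((fun z => z + q) '' M \ M).ncard : ℤ) = (M \ (fun z => z + q) '' M).ncard + q := by
  have hfin : ∀ c, (M ∩ Ici c).Finite := fun c =>
    (bddBelow_Ici.mono inter_subset_right).finite_of_bddAbove (hhi.mono inter_subset_left)
  set c := a - |q|
  have hca : c ≤ a := sub_le_self a (abs_nonneg q)
  have hcqa : c - q ≤ a := by linarith [neg_le_abs q]
  have hXI : (fun z => z + q) '' M \ M ⊆ Ici c := by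
    rintro z ⟨-, hz⟩
    exact hca.trans (not_lt.1 fun h => hz (hlo h))
  have hMI : M \ (fun z => z + q) '' M ⊆ Ici c := by
    rintro z ⟨-, hz⟩
    have : a ≤ z - q := not_lt.1 fun h => hz ⟨z - q, hlo h, sub_add_cancel z q⟩
    show c ≤ z
    linarith [neg_abs_le q]
  have hXc : ((fun z => z + q) '' M ∩ Ici c).ncard = (M ∩ Ici (c - q)).ncard := by
    rw [image_add_inter_Ici, ncard_image_of_injective _ (add_left_injective q)]
  have key := ncard_sdiff_sub_ncard_sdiff
    (by rw [image_add_inter_Ici]; exact (hfin _).image _) (hfin c) hXI hMI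
  rw [hXc, ncard_inter_Ici_of_Iio_subset hlo (hfin a) hcqa,
    ncard_inter_Ici_of_Iio_subset hlo (hfin a) hca] at key
  linarith

end CoBounded

theorem bddAbove_Maya {lam : ℕ → ℕ} (hmono : ∀ i, 1 ≤ i → lam (i + 1) ≤ lam i) :
    BddAbove (Maya lam) := by
  refine ⟨lam 1, ?_⟩
  rintro _ ⟨i, hi, rfl⟩
  have : lam i ≤ lam 1 := antitoneOn_nat_Ici_of_succ_le hmono (le_refl 1) hi hi
  omega

theorem Iio_subset_Maya {lam : ℕ → ℕ} {n : ℕ} (hn : ∀ i, n ≤ i → lam i = 0) :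
    Iio (-n : ℤ) ⊆ Maya lam := by
  intro z (hz : z < -n)
  refine ⟨(-z).toNat, by omega, ?_⟩
  rw [hn _ (by omega)]
  omega

/-- For every partition `λ` and every integer `q`, `g^(λ)_q = g^(λ)_{-q} + q`. -/
theorem stmt13 (lam : ℕ → ℕ) (hp : IsPartition lam) (q : ℤ) :
    (gq lam q : ℤ) = gq lam (-q) + q := by
  obtain ⟨-, hmono, n, hn⟩ := hp
  rw [gq, gq, ← sdiff_eq, ← sdiff_eq, ncard_image_add_neg_sdiff]
  exact ncard_image_add_sdiff (Iio_subset_Maya hn) (bddAbove_Maya hmono) q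
end

section
/- (Reindexing Lemma) For a partition λ with ℓ = ℓ(λ), define κ^(λ)(m) = Π_{i=1}^{ℓ} (m − m_i(λ)) where m_i(λ) = λ_i − i, and γ^(λ)_k(m) = Π_{j ∈ G^(λ)_k} (m − j) with G^(λ)_k = (M^(λ)+k) ∩ (ℤ \ M^(λ)). Let F_k(x) = Γ(x+1)/Γ(x−k+1) denote the generalized falling factorial. Then κ^(λ)(m) γ^(λ)_k(m) = κ^(λ)(m−k) γ^(λ)_{−k}(m−k) F_k(m+ℓ) as an identity of rational functions of m, for every integer k. -/
/-- The generalized falling factorial `F_k(x) = Γ(x+1)/Γ(x-k+1)`: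
`F_k(x) = x(x-1)⋯(x-k+1)` for `k ≥ 0`, and
`F_k(x) = ((x+1)(x+2)⋯(x-k))⁻¹` for `k ≤ -1`. -/
noncomputable def Ffall (k : ℤ) (x : ℝ) : ℝ :=
  if 0 ≤ k then ∏ i ∈ Finset.range k.toNat, (x - i)
  else (∏ i ∈ Finset.range (-k).toNat, (x + 1 + i))⁻¹

open Finset

lemma prod_Ico_zero_sub_eq_prod_range (k : ℤ) (x : ℝ) :
    ∏ j ∈ Ico 0 k, (x - j) = ∏ i ∈ range k.toNat, (x - i) := by
  rw [Int.Ico_eq_finset_map, prod_map, sub_zero]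
  simp

lemma prod_Ico_sub_zero_eq_prod_range (k : ℤ) (x : ℝ) :
    ∏ j ∈ Ico k 0, (x - j) = ∏ i ∈ range (-k).toNat, (x + 1 + i) := by
  have hIco : Ico k 0 = (range (-k).toNat).image (fun i : ℕ => -1 - (i : ℤ)) := by
    ext j
    simp only [mem_Ico, mem_image, mem_range]
    constructor
    · exact fun h => ⟨(-1 - j).toNat, by omega, by omega⟩
    · rintro ⟨i, hi, rfl⟩
      omega
  rw [hIco, prod_image fun _ _ _ _ h => by omega]
  refine prod_congr rfl fun i _ => ?_
  push_cast
  ring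

lemma Ffall_mul_prod_Ico (k : ℤ) (x : ℝ) (hx : ∏ j ∈ Ico k 0, (x - j) ≠ 0) :
    Ffall k x * ∏ j ∈ Ico k 0, (x - j) = ∏ j ∈ Ico 0 k, (x - j) := by
  unfold Ffall
  split_ifs with hk
  · rw [Ico_eq_empty_of_le hk, prod_empty, mul_one, prod_Ico_zero_sub_eq_prod_range]
  · rw [Ico_eq_empty_of_le (show k ≤ 0 by omega), prod_empty, ← prod_Ico_sub_zero_eq_prod_range,
      inv_mul_cancel₀ hx]

lemma mem_iff_of_coe_eq_image_add_inter_compl {S : Set ℤ} {G : Finset ℤ} {k : ℤ}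
    (hG : (G : Set ℤ) = (· + k) '' S ∩ Sᶜ) (j : ℤ) : j ∈ G ↔ j - k ∈ S ∧ j ∉ S := by
  rw [← mem_coe, hG, Set.image_add_right, sub_eq_add_neg]
  rfl

lemma mem_map_addRightEmbedding_iff (k j : ℤ) (s : Finset ℤ) :
    j ∈ s.map (addRightEmbedding k) ↔ j - k ∈ s := by
  simp only [mem_map, addRightEmbedding_apply, ← eq_sub_iff_add_eq, exists_eq_right]

section ShiftDiff

variable {S : Set ℤ} {c k : ℤ} {A G G' : Finset ℤ}

-- Both sides are `(S ∪ (S + k)) ∩ [min c (c + k), ∞)`.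
lemma union_Ico_eq_map_union_Ico (hlow : Set.Iio c ⊆ S) (hA : ∀ j, j ∈ A ↔ j ∈ S ∧ c ≤ j)
    (hG : ∀ j, j ∈ G ↔ j - k ∈ S ∧ j ∉ S) (hG' : ∀ j, j ∈ G' ↔ j + k ∈ S ∧ j ∉ S) :
    A ∪ G ∪ Ico (c + k) c = (A ∪ G').map (addRightEmbedding k) ∪ Ico c (c + k) := by
  ext j
  simp only [mem_union, map_union, mem_map_addRightEmbedding_iff, hA, hG, hG', mem_Ico,
    sub_add_cancel]
  have h1 : j ∉ S → c ≤ j := fun h => not_lt.1 fun hj => h (hlow hj)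
  have h2 : j - k ∉ S → c ≤ j - k := fun h => not_lt.1 fun hj => h (hlow hj)
  by_cases hj : j ∈ S <;> by_cases hjk : j - k ∈ S <;>
    simp only [hj, hjk, not_true_eq_false, not_false_eq_true, IsEmpty.forall_iff, forall_const,
      true_and, false_and, and_true, and_false, and_self, or_true, true_or, or_false, false_or,
      or_self, iff_true, true_iff] at h1 h2 ⊢ <;>
    omega

lemma disjoint_union_Ico (hlow : Set.Iio c ⊆ S) (hA : ∀ j, j ∈ A ↔ j ∈ S ∧ c ≤ j)
    (hG : ∀ j, j ∈ G ↔ j - k ∈ S ∧ j ∉ S) :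
    Disjoint A G ∧ Disjoint (A ∪ G) (Ico (c + k) c) := by
  simp only [disjoint_left, mem_union, mem_Ico, hA, hG]
  refine ⟨fun j hjA hjG => hjG.2 hjA.1, fun j hjAG hj => ?_⟩
  rcases hjAG with hjA | hjG
  · omega
  · exact hjG.2 (hlow hj.2)

lemma disjoint_map_union_Ico (hlow : Set.Iio c ⊆ S) (hA : ∀ j, j ∈ A ↔ j ∈ S ∧ c ≤ j)
    (hG' : ∀ j, j ∈ G' ↔ j + k ∈ S ∧ j ∉ S) :
    Disjoint A G' ∧ Disjoint ((A ∪ G').map (addRightEmbedding k)) (Ico c (c + k)) := by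
  simp only [disjoint_left, mem_union, map_union, mem_map_addRightEmbedding_iff, mem_Ico, hA, hG',
    sub_add_cancel]
  refine ⟨fun j hjA hjG' => hjG'.2 hjA.1, fun j hjAG hj => ?_⟩
  rcases hjAG with hjA | hjG'
  · omega
  · exact hjG'.2 (hlow (Set.mem_Iio.2 (by omega)))

theorem prod_mul_prod_mul_prod_Ico_eq (hlow : Set.Iio c ⊆ S)
    (hA : ∀ j, j ∈ A ↔ j ∈ S ∧ c ≤ j) (hG : ∀ j, j ∈ G ↔ j - k ∈ S ∧ j ∉ S)
    (hG' : ∀ j, j ∈ G' ↔ j + k ∈ S ∧ j ∉ S) {M : Type*} [CommMonoid M] (f : ℤ → M) :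
    (∏ j ∈ A, f j) * (∏ j ∈ G, f j) * ∏ j ∈ Ico k 0, f (c + j) =
      (∏ j ∈ A, f (j + k)) * (∏ j ∈ G', f (j + k)) * ∏ j ∈ Ico 0 k, f (c + j) := by
  obtain ⟨hAG, hAGI⟩ := disjoint_union_Ico hlow hA hG
  obtain ⟨hAG', hAGI'⟩ := disjoint_map_union_Ico hlow hA hG'
  have hshift : ∀ a b, ∏ j ∈ Ico a b, f (c + j) = ∏ j ∈ Ico (c + a) (c + b), f j := fun a b => by
    rw [← map_add_left_Ico, prod_map]
    rfl
  rw [hshift, hshift, add_zero, ← prod_union hAG, ← prod_union hAGI,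
    union_Ico_eq_map_union_Ico hlow hA hG hG', prod_union hAGI', prod_map, prod_union hAG']
  rfl

end ShiftDiff

namespace IsPartition

variable {lam : ℕ → ℕ}

lemma antitoneOn (hp : IsPartition lam) : AntitoneOn lam (Set.Ici 1) :=
  antitoneOn_nat_Ici_of_succ_le hp.2.1

lemma ne_zero_iff (hp : IsPartition lam) {i : ℕ} : lam i ≠ 0 ↔ 1 ≤ i ∧ i ≤ plen lam := by
  classical
  have hanti := hp.antitoneOn
  obtain ⟨h0, -, n, hn⟩ := hp
  have hex : ∃ i, 1 ≤ i ∧ lam i = 0 := ⟨n + 1, by omega, hn _ (by omega)⟩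
  set N := Nat.find hex
  have hN : 1 ≤ N ∧ lam N = 0 := Nat.find_spec hex
  have hiff : ∀ i, lam i ≠ 0 ↔ 1 ≤ i ∧ i < N := fun i => by
    refine ⟨fun hi => ⟨?_, ?_⟩, fun hi => ?_⟩
    · rcases i with _ | i
      · exact absurd h0 hi
      · omega
    · by_contra! hNi
      exact hi (Nat.le_zero.1 (hN.2 ▸ hanti hN.1 (le_trans hN.1 hNi) hNi))
    · exact fun h => Nat.find_min hex hi.2 ⟨hi.1, h⟩
  have hplen : plen lam = N - 1 := by
    have : {i | lam i ≠ 0} = ↑(Ico 1 N) := by ext i; simp [hiff]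
    rw [plen, this, Set.ncard_coe_finset, Nat.card_Ico]
  rw [hiff, hplen]
  omega

lemma eq_zero_of_plen_lt (hp : IsPartition lam) {i : ℕ} (hi : plen lam < i) : lam i = 0 := by
  by_contra h
  have := hp.ne_zero_iff.1 h
  omega

lemma strictAntiOn_sub (hp : IsPartition lam) :
    StrictAntiOn (fun i : ℕ => (lam i : ℤ) - i) (Set.Ici 1) := fun i hi j hj hij => by
  have := hp.antitoneOn hi hj hij.le
  dsimp only
  omega

lemma Iio_subset_maya (hp : IsPartition lam) : Set.Iio (-(plen lam : ℤ)) ⊆ Maya lam := by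
  intro j (hj : j < _)
  refine ⟨(-j).toNat, by omega, ?_⟩
  rw [hp.eq_zero_of_plen_lt (by omega)]
  omega

lemma mem_image_sub_iff (hp : IsPartition lam) {j : ℤ} :
    j ∈ (Icc 1 (plen lam)).image (fun i : ℕ => (lam i : ℤ) - i) ↔
      j ∈ Maya lam ∧ -(plen lam : ℤ) ≤ j := by
  simp only [mem_image, mem_Icc]
  constructor
  · rintro ⟨i, hi, rfl⟩
    have := hp.ne_zero_iff.2 hi
    exact ⟨⟨i, hi.1, rfl⟩, by omega⟩
  · rintro ⟨⟨i, hi, rfl⟩, hj⟩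
    refine ⟨i, ⟨hi, ?_⟩, rfl⟩
    by_contra! hlt
    have := hp.eq_zero_of_plen_lt hlt
    omega

end IsPartition

/-- Reindexing Lemma: with `κ^(λ)(m) = ∏_{i=1}^{ℓ} (m - m_i(λ))` where
`m_i(λ) = λ_i - i`, and `γ^(λ)_k(m) = ∏_{j ∈ G^(λ)_k} (m - j)` where
`G^(λ)_k = (M^(λ)+k) ∩ (ℤ \ M^(λ))`, one has the identity of rational
functions of `m`:
`κ^(λ)(m) γ^(λ)_k(m) = κ^(λ)(m-k) γ^(λ)_{-k}(m-k) F_k(m+ℓ)`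
(stated for every real `m` avoiding the poles of `F_k(m+ℓ)`). -/
theorem stmt16 (lam : ℕ → ℕ) (hp : IsPartition lam) (k : ℤ)
    (Gk Gmk : Finset ℤ)
    (hGk : (Gk : Set ℤ) = ((fun z => z + k) '' Maya lam) ∩ (Maya lam)ᶜ)
    (hGmk : (Gmk : Set ℤ) = ((fun z => z + (-k)) '' Maya lam) ∩ (Maya lam)ᶜ)
    (m : ℝ)
    (hden : ∀ i ∈ Finset.range (-k).toNat, m + (plen lam : ℝ) + 1 + (i : ℝ) ≠ 0) :
    (∏ i ∈ Finset.Icc 1 (plen lam), (m - ((lam i : ℝ) - i))) * (∏ j ∈ Gk, (m - (j : ℝ))) =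
      (∏ i ∈ Finset.Icc 1 (plen lam), ((m - k) - ((lam i : ℝ) - i)))
        * (∏ j ∈ Gmk, ((m - k) - (j : ℝ))) * Ffall k (m + plen lam) := by
  have hκ : ∀ x : ℝ, ∏ i ∈ Icc 1 (plen lam), (x - ((lam i : ℝ) - i)) =
      ∏ j ∈ (Icc 1 (plen lam)).image (fun i : ℕ => (lam i : ℤ) - i), (x - j) := fun x => by
    rw [prod_image (hp.strictAntiOn_sub.injOn.mono fun i hi => (mem_Icc.1 hi).1)]
    push_cast
    rfl
  have key := prod_mul_prod_mul_prod_Ico_eq hp.Iio_subset_maya (fun _ => hp.mem_image_sub_iff)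
    (mem_iff_of_coe_eq_image_add_inter_compl hGk)
    (fun j => by rw [mem_iff_of_coe_eq_image_add_inter_compl hGmk, sub_neg_eq_add])
    (fun j : ℤ => m - (j : ℝ))
  have hshift : ∀ j : ℤ, m - ((j + k : ℤ) : ℝ) = (m - k) - j := fun j => by push_cast; ring
  have hc : ∀ j : ℤ, m - ((-(plen lam : ℤ) + j : ℤ) : ℝ) = (m + plen lam) - j := fun j => by
    push_cast; ring
  simp only [hshift, hc] at key
  have hP : ∏ j ∈ Ico k 0, ((m + plen lam) - j) ≠ 0 := by
    rw [prod_Ico_sub_zero_eq_prod_range]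
    exact prod_ne_zero_iff.2 hden
  apply mul_right_cancel₀ hP
  rw [mul_assoc _ (Ffall _ _), Ffall_mul_prod_Ico k _ hP, hκ, hκ]
  exact key
end
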